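/- arXiv:2312.04439 — 2 statements merged into one kernel-verified Lean document; each statement's English description precedes it below -/
import Mathlib

section
/- If f is a monoid automorphism of P_fin0(ℕ), then max f(X) = max X for every X ∈ P_fin0(ℕ). -/
open Pointwise

/-- The reduced power monoid `P_fin0(ℕ)`: finite subsets of ℕ containing 0,
under setwise (pointwise) addition. -/
def P0 : AddSubmonoid (Finset ℕ) where
  carrier := {X : Finset ℕ | (0 : ℕ) ∈ X}
  add_mem' := fun hx hy => by simpa using Finset.add_mem_add hx hy
  zero_mem' := by simp [Finset.mem_zero]

/-- Maximum of a set in `P0`. -/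
def mx (X : P0) : ℕ := X.1.max' ⟨0, X.2⟩

lemma mx_mem (X : P0) : mx X ∈ X.1 := Finset.max'_mem _ _

lemma le_mx (X : P0) {a : ℕ} (ha : a ∈ X.1) : a ≤ mx X := Finset.le_max' _ _ ha

lemma mx_add (X Y : P0) : mx (X + Y) = mx X + mx Y := by
  apply le_antisymm
  · apply Finset.max'_le
    intro y hy
    rw [show ((X+Y : P0) : Finset ℕ) = X.1 + Y.1 from rfl, Finset.mem_add] at hy
    obtain ⟨a, ha, b, hb, rfl⟩ := hy
    exact Nat.add_le_add (le_mx X ha) (le_mx Y hb)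
  · apply Finset.le_max'
    rw [show ((X+Y : P0) : Finset ℕ) = X.1 + Y.1 from rfl, Finset.mem_add]
    exact ⟨mx X, mx_mem X, mx Y, mx_mem Y, rfl⟩

lemma mx_zero : mx 0 = 0 := by
  have : ((0 : P0) : Finset ℕ) = {0} := rfl
  simp [mx, this]

lemma mx_nsmul (n : ℕ) (X : P0) : mx (n • X) = n * mx X := by
  induction n with
  | zero => simpa using mx_zero
  | succ k ih => rw [succ_nsmul, mx_add, ih]; ring

/-- The interval `{0, 1, ..., n}` as an element of `P0`. -/
def I (n : ℕ) : P0 := ⟨Finset.range (n + 1), by simp [P0]⟩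

lemma mx_I (n : ℕ) : mx (I n) = n := by
  apply le_antisymm
  · apply Finset.max'_le
    intro y hy
    simp only [I, Finset.mem_range] at hy
    omega
  · apply Finset.le_max'
    simp [I]

lemma I_smul (n : ℕ) : I n = n • I 1 := by
  induction n with
  | zero =>
    apply Subtype.ext
    rfl
  | succ k ih =>
    rw [succ_nsmul, ← ih]
    apply Subtype.ext
    show Finset.range (k + 2) = Finset.range (k + 1) + Finset.range 2
    ext t
    simp only [Finset.mem_add, Finset.mem_range]
    constructor
    · intro ht
      rcases Nat.lt_or_ge t (k + 1) with h | h
      · exact ⟨t, h, 0, by omega, by omega⟩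
      · exact ⟨t - 1, by omega, 1, by omega, by omega⟩
    · rintro ⟨a, ha, b, hb, rfl⟩; omega

lemma key (X : P0) {n : ℕ} (h : mx X ≤ n) : X + I n = I (n + mx X) := by
  apply Subtype.ext
  show X.1 + Finset.range (n + 1) = Finset.range (n + mx X + 1)
  ext t
  simp only [Finset.mem_add, Finset.mem_range]
  constructor
  · rintro ⟨a, ha, b, hb, rfl⟩
    have := le_mx X ha
    omega
  · intro ht
    rcases Nat.lt_or_ge t (n + 1) with h' | h'
    · exact ⟨0, X.2, t, h', by omega⟩
    · exact ⟨mx X, mx_mem X, t - mx X, by omega, by omega⟩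

lemma hom_scales (f : P0 ≃+ P0) (X : P0) : mx (f X) = mx (f (I 1)) * mx X := by
  set c := mx (f (I 1)) with hc
  set m := mx X with hm
  have hkey : X + I m = I (m + m) := key X le_rfl
  have hfI : ∀ k : ℕ, mx (f (I k)) = k * c := by
    intro k
    rw [I_smul k, map_nsmul, mx_nsmul]
  have := congrArg (fun Z => mx (f Z)) hkey
  simp only [map_add, mx_add] at this
  rw [hfI m, hfI (m + m)] at this
  -- this : mx (f X) + m * c = (m + m) * c
  have h2 : (m + m) * c = m * c + m * c := by ring
  rw [h2] at this
  have h3 : mx (f X) = m * c := by omega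
  rw [h3, Nat.mul_comm]

/-- automorphisms of P_fin0(ℕ) preserve maxima. -/
theorem stmt11 (f : P0 ≃+ P0) (X : P0) : mx (f X) = mx X := by
  have h1 := hom_scales f
  have h2 := hom_scales f.symm
  have hc : mx (f.symm (I 1)) * mx (f (I 1)) = 1 := by
    have := h2 (f (I 1))
    rw [AddEquiv.symm_apply_apply, mx_I] at this
    omega
  have : mx (f (I 1)) = 1 := Nat.eq_one_of_mul_eq_one_left hc
  rw [h1 X, this, one_mul]
end

section
/- If f is a monoid automorphism of P_fin0(ℕ), then f({0, 2, 3}) = {0, 1, 3} or f({0, 2, 3}) = {0, 2, 3}. -/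
/-! An automorphism `f` preserves maxima: `X ↦ mx (f X)` is additive and, on intervals
`[0, n]`, linear in `n`; since `X + [0, mx X] = [0, 2 mx X]` it is `mx X` times a constant,
which must be `1` because `f` is invertible. Hence `f` fixes every interval, and `f {0,2,3}`
is a subset of `[0, 3]` containing `0` and `3`. It is not `[0, 3] = f [0, 3]` by injectivity,
and not `{0, 3}`: from `{0,2} + {0,3,4} = {0,2,3} + {0,2,3}` the set `f {0,2} ∋ 2` would lie
in `{0,3} + {0,3} = {0,3,6}`. -/

open Pointwise

theorem mem_P0 {X : Finset ℕ} : X ∈ P0 ↔ (0 : ℕ) ∈ X := Iff.rfl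

namespace P0

lemma coe_add (X Y : P0) : (X + Y).1 = X.1 + Y.1 := rfl

lemma subset_add_right (X Y : P0) : X.1 ⊆ (X + Y).1 := fun x hx =>
  Finset.mem_add.mpr ⟨x, hx, 0, Y.2, add_zero x⟩

lemma mx_mem (X : P0) : mx X ∈ X.1 := Finset.max'_mem _ _

lemma le_mx {X : P0} {x : ℕ} (h : x ∈ X.1) : x ≤ mx X := Finset.le_max' _ _ h

lemma mx_add (X Y : P0) : mx (X + Y) = mx X + mx Y := by
  apply le_antisymm
  · refine Finset.max'_le _ _ _ fun t ht => ?_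
    obtain ⟨x, hx, y, hy, rfl⟩ := Finset.mem_add.mp ht
    exact add_le_add (le_mx hx) (le_mx hy)
  · exact le_mx (Finset.mem_add.mpr ⟨_, mx_mem X, _, mx_mem Y, rfl⟩)

lemma mx_zero : mx 0 = 0 := rfl

def Iic (n : ℕ) : P0 := ⟨Finset.range (n + 1), mem_P0.mpr (Finset.mem_range.mpr n.succ_pos)⟩

lemma mx_Iic (n : ℕ) : mx (Iic n) = n :=
  le_antisymm (Finset.max'_le _ _ _ fun _ ht => Nat.lt_succ_iff.mp (Finset.mem_range.mp ht))
    (le_mx (Finset.self_mem_range_succ n))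

lemma add_Iic {X : P0} {n : ℕ} (h : mx X ≤ n + 1) : X + Iic n = Iic (n + mx X) := by
  ext t
  simp only [coe_add, Iic, Finset.mem_add, Finset.mem_range]
  constructor
  · rintro ⟨x, hx, y, hy, rfl⟩
    have := le_mx hx
    omega
  · intro ht
    by_cases htn : t ≤ n
    · exact ⟨0, X.2, t, by omega, by omega⟩
    · exact ⟨mx X, mx_mem X, t - mx X, by omega, by omega⟩

lemma Iic_one_add_Iic (n : ℕ) : Iic 1 + Iic n = Iic (n + 1) := by
  simpa only [mx_Iic] using add_Iic (X := Iic 1) (n := n) (by rw [mx_Iic]; omega)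

lemma exists_mx_map_eq_mul (f : P0 →+ P0) : ∃ a, ∀ X, mx (f X) = mx X * a := by
  refine ⟨mx (f (Iic 1)), fun X => ?_⟩
  have hIic : ∀ n, mx (f (Iic n)) = n * mx (f (Iic 1)) := by
    intro n
    induction n with
    | zero => rw [show Iic 0 = 0 from rfl, map_zero, mx_zero, zero_mul]
    | succ n ih => rw [← Iic_one_add_Iic, map_add, mx_add, ih]; ring
  have h := congrArg (fun Y => mx (f Y)) (add_Iic (X := X) (n := mx X) (by omega))
  simp only [map_add, mx_add] at h
  rw [hIic (mx X), hIic (mx X + mx X)] at h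
  linarith

lemma mx_map (f : P0 ≃+ P0) (X : P0) : mx (f X) = mx X := by
  obtain ⟨a, ha⟩ := exists_mx_map_eq_mul f.toAddMonoidHom
  obtain ⟨b, hb⟩ := exists_mx_map_eq_mul f.symm.toAddMonoidHom
  simp only [AddEquiv.coe_toAddMonoidHom] at ha hb
  have hab := hb (f (Iic 1))
  rw [f.symm_apply_apply, ha, mx_Iic, one_mul] at hab
  rw [ha, Nat.eq_one_of_mul_eq_one_right hab.symm, mul_one]

lemma eq_Iic_one_of_mx_eq_one {X : P0} (h : mx X = 1) : X = Iic 1 := by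
  ext t
  simp only [Iic, Finset.mem_range]
  constructor
  · intro ht
    have := le_mx ht
    omega
  · intro ht
    obtain rfl | rfl : t = 0 ∨ t = 1 := by omega
    · exact X.2
    · exact h ▸ mx_mem X

lemma map_Iic (f : P0 ≃+ P0) (n : ℕ) : f (Iic n) = Iic n := by
  induction n with
  | zero => exact map_zero f
  | succ n ih =>
    rw [← Iic_one_add_Iic, map_add, ih, eq_Iic_one_of_mx_eq_one ((mx_map f _).trans (mx_Iic 1))]

lemma coe_eq_of_mx_eq_three {X : P0} (h : mx X = 3) :
    X.1 = {0, 3} ∨ X.1 = {0, 1, 3} ∨ X.1 = {0, 2, 3} ∨ X.1 = Finset.range 4 := by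
  have hsub : X.1 ∈ (Finset.range 4).powerset := Finset.mem_powerset.mpr fun t ht =>
    Finset.mem_range.mpr (Nat.lt_succ_of_le (h ▸ le_mx ht))
  have hcases : ∀ T ∈ (Finset.range 4).powerset, 0 ∈ T → 3 ∈ T →
      T = {0, 3} ∨ T = {0, 1, 3} ∨ T = {0, 2, 3} ∨ T = Finset.range 4 := by
    decide
  exact hcases X.1 hsub X.2 (h ▸ mx_mem X)

lemma coe_map_zero_two_three_ne_zero_three (f : P0 ≃+ P0) :
    (f ⟨{0, 2, 3}, mem_P0.mpr (by decide)⟩).1 ≠ {0, 3} := by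
  intro h
  have hsq : (⟨{0, 2}, mem_P0.mpr (by decide)⟩ : P0) + ⟨{0, 3, 4}, mem_P0.mpr (by decide)⟩ =
      ⟨{0, 2, 3}, mem_P0.mpr (by decide)⟩ + ⟨{0, 2, 3}, mem_P0.mpr (by decide)⟩ :=
    Subtype.ext (by decide)
  have h2 : 2 ∈ (f ⟨{0, 2}, mem_P0.mpr (by decide)⟩).1 := by
    have := mx_mem (f ⟨{0, 2}, mem_P0.mpr (by decide)⟩)
    rwa [mx_map] at this
  have h2' := subset_add_right _ (f ⟨{0, 3, 4}, mem_P0.mpr (by decide)⟩) h2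
  rw [← map_add, hsq, map_add, coe_add, h] at h2'
  exact absurd h2' (by decide)

end P0

/-- an automorphism of P_fin0(ℕ) sends `{0,2,3}` either to
`{0,1,3}` or to `{0,2,3}`. -/
theorem stmt13 (f : P0 ≃+ P0) :
    f ⟨({0, 2, 3} : Finset ℕ), by simp [mem_P0]⟩ = ⟨({0, 1, 3} : Finset ℕ), by simp [mem_P0]⟩ ∨
    f ⟨({0, 2, 3} : Finset ℕ), by simp [mem_P0]⟩ = ⟨({0, 2, 3} : Finset ℕ), by simp [mem_P0]⟩ := by
  have hmx : mx (f ⟨{0, 2, 3}, mem_P0.mpr (by decide)⟩) = 3 := (P0.mx_map f _).trans rfl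
  rcases P0.coe_eq_of_mx_eq_three hmx with h | h | h | h
  · exact absurd h (P0.coe_map_zero_two_three_ne_zero_three f)
  · exact Or.inl (Subtype.ext h)
  · exact Or.inr (Subtype.ext h)
  · have h' : f ⟨{0, 2, 3}, mem_P0.mpr (by decide)⟩ = f (P0.Iic 3) :=
      (Subtype.ext h).trans (P0.map_Iic f 3).symm
    exact absurd (congrArg Subtype.val (f.injective h')) (by decide)
end
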